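/- arXiv:2001.03670 — 7 statements merged into one kernel-verified Lean document; each statement's English description precedes it below -/
import Mathlib

section
/- Let P be a finite poset that is partitioned into disjoint antichains A_1, A_2, …, A_m (not necessarily the rank antichains). Then the number e(P) of linear extensions of P satisfies e(P) ≥ ∏_{i=1}^{m} |A_i|!. -/
/-- The number of linear extensions of a finite poset `α`: order-preserving
bijections from `α` to `Fin (card α)` (equivalently, to `{1,…,n}`). -/
noncomputable def linExt (α : Type*) [Fintype α] [PartialOrder α] : ℕ :=
  Nat.card {f : α ≃ Fin (Fintype.card α) // ∀ x y : α, x < y → f x < f y}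

/-!
Encode the linear extensions of a finite set `s` as lists (`linExtLists s`, of which there are
`e(s)`), so that `e(s) = ∑ e(s - y)` over the minimal elements `y` of `s`. Reading a list from the back and keeping every element that lies
below the last element kept produces a chain, the greedy chain; induction along the recursion
shows that `x` lies on the greedy chain of exactly `e(s - x)` linear extensions of `s`. A chain
meets an antichain `B` at most once, so `∑_{x ∈ B} e(s - x) ≤ e(s)`. Choosing `x ∈ B` with
`e(s - x)` smallest and inducting on `B` gives `|B|! * e(s \ B) ≤ e(s)`, and removing the
antichains one at a time gives `∏ |Aᵢ|! ≤ e(P)`.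
-/

open Finset
open scoped Classical Nat

noncomputable section

namespace LinExtList

variable {α : Type*} [PartialOrder α] {s : Finset α} {l t : List α} {x y b u : α}

def mins (s : Finset α) : Finset α := {y ∈ s | ∀ b ∈ s, ¬ b < y}

lemma mem_mins : y ∈ mins s ↔ y ∈ s ∧ ∀ b ∈ s, ¬ b < y := mem_filter

lemma mins_subset : mins s ⊆ s := filter_subset _ _

lemma isAntichain_mins : IsAntichain (· ≤ ·) (mins s : Set α) :=
  fun _ ha _ hb hab hle => (mem_mins.1 hb).2 _ (mem_mins.1 ha).1 (hle.lt_of_ne hab)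

lemma filter_not_lt_mins_erase (hx : x ∈ s) :
    {u ∈ mins (s.erase x) | ¬ x < u} = (mins s).erase x := by
  ext u
  simp only [mem_filter, mem_erase, mem_mins]
  constructor
  · rintro ⟨⟨⟨hux, hus⟩, hmin⟩, hxu⟩
    refine ⟨hux, hus, fun b hb hbu => ?_⟩
    obtain rfl | hbx := eq_or_ne b x
    · exact hxu hbu
    · exact hmin b ⟨hbx, hb⟩ hbu
  · rintro ⟨hux, hus, hmin⟩
    exact ⟨⟨⟨hux, hus⟩, fun b hb => hmin b hb.2⟩, hmin x hx⟩

lemma filter_lt_mins_erase_eq_empty (hx : x ∈ s) (hxm : x ∉ mins s) :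
    {u ∈ mins (s.erase x) | x < u} = ∅ := by
  obtain ⟨z, hz, hzx⟩ : ∃ z ∈ s, z < x := by
    simpa [mem_mins, hx] using hxm
  refine filter_eq_empty_iff.2 fun u hu hxu => ?_
  exact (mem_mins.1 hu).2 z (mem_erase.2 ⟨hzx.ne, hz⟩) (hzx.trans hxu)

def linExtLists (s : Finset α) : Finset (List α) :=
  {l ∈ s.toList.permutations.toFinset | l.Pairwise fun a b => ¬ b < a}

lemma mem_linExtLists :
    l ∈ linExtLists s ↔ (l : Multiset α) = s.val ∧ l.Pairwise fun a b => ¬ b < a := by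
  rw [linExtLists, mem_filter, List.mem_toFinset, List.mem_permutations, ← Multiset.coe_eq_coe,
    coe_toList]

lemma mem_iff_of_mem_linExtLists (hl : l ∈ linExtLists s) : x ∈ l ↔ x ∈ s := by
  rw [← Multiset.mem_coe, (mem_linExtLists.1 hl).1, mem_val]

lemma ne_nil_of_mem_linExtLists (hl : l ∈ linExtLists s) (hs : s.Nonempty) :
    l ≠ [] := by
  rintro rfl
  obtain ⟨x, hx⟩ := hs
  simpa using (mem_iff_of_mem_linExtLists hl).2 hx

lemma linExtLists_empty : linExtLists (∅ : Finset α) = {[]} := by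
  ext l
  simp only [mem_linExtLists, empty_val, mem_singleton]
  exact ⟨fun h => (Multiset.coe_eq_zero l).1 h.1, by rintro rfl; simp⟩

lemma linExtLists_singleton : linExtLists {x} = {[x]} := by
  ext l
  simp only [mem_linExtLists, singleton_val, mem_singleton]
  exact ⟨fun h => Multiset.coe_eq_singleton.1 h.1, by rintro rfl; simp⟩

lemma cons_mem_linExtLists :
    y :: t ∈ linExtLists s ↔ y ∈ mins s ∧ t ∈ linExtLists (s.erase y) := by
  have hval : (y :: t : Multiset α) = s.val ↔ y ∈ s ∧ (t : Multiset α) = (s.erase y).val := by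
    rw [← Multiset.cons_coe, ← Multiset.singleton_add, add_comm, Multiset.add_singleton_eq_iff,
      erase_val, mem_val]
  rw [mem_linExtLists, mem_linExtLists, hval, List.pairwise_cons, mem_mins]
  constructor
  · rintro ⟨⟨hys, ht⟩, hy, hpw⟩
    refine ⟨⟨hys, fun b hb hby => ?_⟩, ht, hpw⟩
    refine hy b ?_ hby
    rw [← Multiset.mem_coe, ht, mem_val]
    exact mem_erase.2 ⟨hby.ne, hb⟩
  · rintro ⟨⟨hys, hy⟩, ht, hpw⟩
    refine ⟨⟨hys, ht⟩, fun a ha => hy a ?_, hpw⟩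
    rw [← Multiset.mem_coe, ht, mem_val] at ha
    exact mem_of_mem_erase ha

lemma card_filter_linExtLists (hs : s.Nonempty) (Φ : List α → Prop) [DecidablePred Φ] :
    #{l ∈ linExtLists s | Φ l} = ∑ y ∈ mins s, #{t ∈ linExtLists (s.erase y) | Φ (y :: t)} := by
  rw [← card_sigma]
  symm
  refine card_bij (fun p _ => p.1 :: p.2) ?_ ?_ ?_
  · rintro ⟨y, t⟩ hp
    simp only [mem_sigma, mem_filter] at hp ⊢
    exact ⟨cons_mem_linExtLists.2 ⟨hp.1, hp.2.1⟩, hp.2.2⟩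
  · rintro ⟨y, t⟩ - ⟨y', t'⟩ - h
    simp only [List.cons.injEq] at h
    obtain ⟨rfl, rfl⟩ := h
    rfl
  · intro l hl
    obtain ⟨hl, hΦ⟩ := mem_filter.1 hl
    obtain _ | ⟨y, t⟩ := l
    · exact absurd rfl (ne_nil_of_mem_linExtLists hl hs)
    · obtain ⟨hy, ht⟩ := cons_mem_linExtLists.1 hl
      exact ⟨⟨y, t⟩, mem_sigma.2 ⟨hy, mem_filter.2 ⟨ht, hΦ⟩⟩, rfl⟩

lemma card_linExtLists (hs : s.Nonempty) :
    #(linExtLists s) = ∑ y ∈ mins s, #(linExtLists (s.erase y)) := by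
  simpa using card_filter_linExtLists hs fun _ => True

lemma card_linExtLists_erase (hx : x ∈ s) (hs : (s.erase x).Nonempty) :
    #(linExtLists (s.erase x)) = (∑ u ∈ (mins s).erase x, #(linExtLists ((s.erase x).erase u)))
      + ∑ u ∈ mins (s.erase x) with x < u, #(linExtLists ((s.erase x).erase u)) := by
  rw [card_linExtLists hs, ← filter_not_lt_mins_erase hx, add_comm,
    sum_filter_add_sum_filter_not]

def greedyChain : List α → List α
  | [] => []
  | y :: t => if ∀ b ∈ (greedyChain t).head?, y < b then y :: greedyChain t else greedyChain t

lemma greedyChain_sublist : ∀ l : List α, (greedyChain l).Sublist l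
  | [] => .slnil
  | y :: t => by
    rw [greedyChain]
    split_ifs
    · exact (greedyChain_sublist t).cons_cons y
    · exact (greedyChain_sublist t).cons y

lemma greedyChain_eq_nil : greedyChain l = [] ↔ l = [] := by
  refine ⟨fun h => ?_, by rintro rfl; rfl⟩
  obtain _ | ⟨y, t⟩ := l
  · rfl
  · rw [greedyChain] at h
    split_ifs at h with hy
    simp [h] at hy

lemma pairwise_greedyChain : ∀ l : List α, (greedyChain l).Pairwise (· < ·)
  | [] => .nil
  | y :: t => by
    have ih := pairwise_greedyChain t
    rw [greedyChain]
    split_ifs with hy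
    · refine List.pairwise_cons.2 ⟨fun c hc => ?_, ih⟩
      rcases h : greedyChain t with _ | ⟨b, r⟩
      · simp [h] at hc
      · rw [h] at hc ih
        have hyb : y < b := hy b (by simp [h])
        obtain rfl | hc := List.mem_cons.1 hc
        · exact hyb
        · exact hyb.trans (List.rel_of_pairwise_cons ih hc)
    · exact ih

lemma isChain_greedyChain (l : List α) : IsChain (· ≤ ·) {a | a ∈ greedyChain l} := by
  have : Std.Symm fun a b : α => a ≤ b ∨ b ≤ a := ⟨fun _ _ => Or.symm⟩
  exact ((pairwise_greedyChain l).imp fun h => Or.inl h.le).forall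

lemma not_lt_head_greedyChain : ∀ {l : List α}, l.Pairwise (fun a b => ¬ b < a) →
    ∀ {b : α}, b ∈ (greedyChain l).head? → ∀ a ∈ l, ¬ a < b
  | [], _, _, hb => by simp [greedyChain] at hb
  | y :: t, hl, b, hb => by
    rw [List.pairwise_cons] at hl
    rw [greedyChain] at hb
    intro a ha
    split_ifs at hb with hy
    · obtain rfl : y = b := by simpa using hb
      obtain rfl | ha := List.mem_cons.1 ha
      · exact lt_irrefl a
      · exact hl.1 a ha
    · obtain rfl | ha := List.mem_cons.1 ha
      · exact fun hab => hy fun c hc => by simp_all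
      · exact not_lt_head_greedyChain hl.2 hb a ha

lemma head_greedyChain_eq_of_mem (hx : x ∈ greedyChain l)
    (hmin : ∀ a ∈ l, ¬ a < x) : (greedyChain l).head? = some x := by
  rcases h : greedyChain l with _ | ⟨b, r⟩
  · simp [h] at hx
  · rw [h] at hx
    obtain rfl | hxr := List.mem_cons.1 hx
    · rfl
    · have hb : b ∈ l := (greedyChain_sublist l).subset (by simp [h])
      have hbx : b < x := List.rel_of_pairwise_cons (h ▸ pairwise_greedyChain l) hxr
      exact absurd hbx (hmin b hb)

lemma mem_greedyChain_cons_of_ne (h : x ≠ y) :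
    x ∈ greedyChain (y :: t) ↔ x ∈ greedyChain t := by
  rw [greedyChain]
  split_ifs <;> simp [h]

lemma mem_greedyChain_cons_self (hx : x ∉ t) :
    x ∈ greedyChain (x :: t) ↔ ∀ b ∈ (greedyChain t).head?, x < b := by
  rw [greedyChain]
  split_ifs with h
  · exact iff_of_true List.mem_cons_self h
  · simp only [h, iff_false]
    exact fun hm => hx ((greedyChain_sublist t).subset hm)

lemma card_filter_exists_mem_greedyChain {B : Finset α} (hB : IsAntichain (· ≤ ·) (B : Set α))
    (T : Finset (List α)) :
    #{l ∈ T | ∃ x ∈ B, x ∈ greedyChain l} = ∑ x ∈ B, #{l ∈ T | x ∈ greedyChain l} := by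
  rw [← card_biUnion]
  · congr 1
    ext l
    simp only [mem_filter, mem_biUnion]
    tauto
  · intro x hx y hy hxy
    refine disjoint_left.2 fun l hlx hly => hxy ?_
    exact inter_subsingleton_of_isChain_of_isAntichain (isChain_greedyChain l) hB
      ⟨(mem_filter.1 hlx).2, hx⟩ ⟨(mem_filter.1 hly).2, hy⟩

lemma head_greedyChain_mem_mins (ht : t ∈ linExtLists s) (hb : b ∈ (greedyChain t).head?) :
    b ∈ mins s :=
  mem_mins.2 ⟨(mem_iff_of_mem_linExtLists ht).1
      ((greedyChain_sublist t).subset (List.mem_of_mem_head? hb)),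
    fun a ha => not_lt_head_greedyChain (mem_linExtLists.1 ht).2 hb a
      ((mem_iff_of_mem_linExtLists ht).2 ha)⟩

lemma mem_greedyChain_iff_head_eq (ht : t ∈ linExtLists s) (hu : u ∈ mins s) :
    u ∈ greedyChain t ↔ (greedyChain t).head? = some u :=
  ⟨fun h => head_greedyChain_eq_of_mem h fun a ha =>
    (mem_mins.1 hu).2 a ((mem_iff_of_mem_linExtLists ht).1 ha), List.mem_of_mem_head?⟩

lemma forall_head_greedyChain_iff (ht : t ∈ linExtLists s) (hs : s.Nonempty) (p : α → Prop) :
    (∀ b ∈ (greedyChain t).head?, p b) ↔ ∃ u ∈ {u ∈ mins s | p u}, u ∈ greedyChain t := by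
  constructor
  · intro h
    obtain ⟨b, r, hbr⟩ := List.exists_cons_of_ne_nil
      (mt greedyChain_eq_nil.1 (ne_nil_of_mem_linExtLists ht hs))
    have hb : b ∈ (greedyChain t).head? := by simp [hbr]
    exact ⟨b, mem_filter.2 ⟨head_greedyChain_mem_mins ht hb, h b hb⟩, List.mem_of_mem_head? hb⟩
  · rintro ⟨u, hu, hut⟩ b hb
    obtain ⟨hu, hpu⟩ := mem_filter.1 hu
    rw [(mem_greedyChain_iff_head_eq ht hu).1 hut, Option.mem_some_iff] at hb
    exact hb ▸ hpu

lemma card_filter_mem_greedyChain (hx : x ∈ s) :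
    #{l ∈ linExtLists s | x ∈ greedyChain l} = #(linExtLists (s.erase x)) := by
  induction s using Finset.strongInduction generalizing x with
  | H s ih =>
  obtain hs | hs := (s.erase x).eq_empty_or_nonempty
  · obtain rfl : s = {x} := ((erase_eq_empty_iff s x).1 hs).resolve_left (ne_empty_of_mem hx)
    rw [linExtLists_singleton, erase_singleton, linExtLists_empty, filter_singleton,
      if_pos (by simp [greedyChain]), card_singleton, card_singleton]
  have h_other : ∀ y ∈ (mins s).erase x,
      #{t ∈ linExtLists (s.erase y) | x ∈ greedyChain (y :: t)}
        = #(linExtLists ((s.erase x).erase y)) := by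
    intro y hy
    obtain ⟨hyx, hy⟩ := mem_erase.1 hy
    simp_rw [mem_greedyChain_cons_of_ne hyx.symm]
    rw [ih _ (erase_ssubset (mins_subset hy)) (mem_erase.2 ⟨hyx.symm, hx⟩), erase_right_comm]
  rw [card_filter_linExtLists ⟨x, hx⟩, card_linExtLists_erase hx hs]
  by_cases hxm : x ∈ mins s
  · rw [← add_sum_erase _ _ hxm, sum_congr rfl h_other, add_comm]
    congr 1
    have hU : IsAntichain (· ≤ ·) (({u ∈ mins (s.erase x) | x < u} : Finset α) : Set α) :=
      isAntichain_mins.subset (coe_subset.2 (filter_subset _ _))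
    -- with `x` first, `x` joins the chain iff the chain of the rest starts above `x`
    rw [filter_congr fun t ht => (mem_greedyChain_cons_self fun h =>
        notMem_erase x s ((mem_iff_of_mem_linExtLists ht).1 h)).trans
          (forall_head_greedyChain_iff ht hs (x < ·)),
      card_filter_exists_mem_greedyChain hU]
    exact sum_congr rfl fun u hu => ih _ (erase_ssubset hx) (mins_subset (mem_filter.1 hu).1)
  · rw [filter_lt_mins_erase_eq_empty hx hxm, sum_empty, add_zero, erase_eq_of_notMem hxm]
    exact sum_congr rfl fun y hy => h_other y (mem_erase.2 ⟨fun h => hxm (h ▸ hy), hy⟩)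

lemma sum_card_linExtLists_erase_le {B : Finset α} (hBs : B ⊆ s)
    (hB : IsAntichain (· ≤ ·) (B : Set α)) :
    ∑ x ∈ B, #(linExtLists (s.erase x)) ≤ #(linExtLists s) :=
  calc ∑ x ∈ B, #(linExtLists (s.erase x))
      = ∑ x ∈ B, #{l ∈ linExtLists s | x ∈ greedyChain l} :=
        sum_congr rfl fun _ hx => (card_filter_mem_greedyChain (hBs hx)).symm
    _ = #{l ∈ linExtLists s | ∃ x ∈ B, x ∈ greedyChain l} :=
        (card_filter_exists_mem_greedyChain hB _).symm
    _ ≤ #(linExtLists s) := card_filter_le _ _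

lemma card_linExtLists_pos (s : Finset α) : 0 < #(linExtLists s) := by
  induction s using Finset.strongInduction with
  | H s ih =>
  obtain rfl | ⟨x, hx⟩ := s.eq_empty_or_nonempty
  · simp [linExtLists_empty]
  · calc 0 < #(linExtLists (s.erase x)) := ih _ (erase_ssubset hx)
      _ = #{l ∈ linExtLists s | x ∈ greedyChain l} := (card_filter_mem_greedyChain hx).symm
      _ ≤ #(linExtLists s) := card_filter_le _ _

lemma factorial_card_mul_card_linExtLists_sdiff_le {B : Finset α} (hBs : B ⊆ s)
    (hB : IsAntichain (· ≤ ·) (B : Set α)) :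
    (#B)! * #(linExtLists (s \ B)) ≤ #(linExtLists s) := by
  induction B using Finset.strongInduction generalizing s with
  | H B ih =>
  obtain rfl | hne := B.eq_empty_or_nonempty
  · simp
  obtain ⟨x, hxB, hx⟩ := exists_min_image B (fun y => #(linExtLists (s.erase y))) hne
  have hsdiff : s.erase x \ B.erase x = s \ B := by
    ext a
    by_cases hax : a = x <;> simp [hax, hxB]
  have ih' := ih (B.erase x) (erase_ssubset hxB) (erase_subset_erase x hBs)
    (hB.subset (coe_subset.2 (erase_subset x B)))
  rw [hsdiff, card_erase_of_mem hxB] at ih'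
  calc (#B)! * #(linExtLists (s \ B))
      = #B * ((#B - 1)! * #(linExtLists (s \ B))) := by
        rw [← mul_assoc, Nat.mul_factorial_pred hne.card_pos.ne']
    _ ≤ #B * #(linExtLists (s.erase x)) := Nat.mul_le_mul_left _ ih'
    _ = ∑ _y ∈ B, #(linExtLists (s.erase x)) := by rw [sum_const, smul_eq_mul]
    _ ≤ ∑ y ∈ B, #(linExtLists (s.erase y)) := sum_le_sum hx
    _ ≤ #(linExtLists s) := sum_card_linExtLists_erase_le hBs hB

lemma prod_factorial_card_le_card_linExtLists {ι : Type*} (I : Finset ι) (B : ι → Finset α)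
    (hBs : ∀ i ∈ I, B i ⊆ s) (hB : ∀ i ∈ I, IsAntichain (· ≤ ·) (B i : Set α))
    (hdisj : (I : Set ι).PairwiseDisjoint B) :
    ∏ i ∈ I, (#(B i))! ≤ #(linExtLists s) := by
  induction I using Finset.induction_on generalizing s with
  | empty => simpa using card_linExtLists_pos s
  | insert j I hj ih =>
    rw [coe_insert] at hdisj
    have hBs' : ∀ i ∈ I, B i ⊆ s \ B j := fun i hi =>
      subset_sdiff.2 ⟨hBs i (mem_insert_of_mem hi),
        hdisj (Set.mem_insert_of_mem _ hi) (Set.mem_insert _ _) (ne_of_mem_of_not_mem hi hj)⟩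
    rw [prod_insert hj]
    calc (#(B j))! * ∏ i ∈ I, (#(B i))!
        ≤ (#(B j))! * #(linExtLists (s \ B j)) :=
          Nat.mul_le_mul_left _ (ih hBs' (fun i hi => hB i (mem_insert_of_mem hi))
            (hdisj.subset (Set.subset_insert _ _)))
      _ ≤ #(linExtLists s) := factorial_card_mul_card_linExtLists_sdiff_le
          (hBs j (mem_insert_self j I)) (hB j (mem_insert_self j I))

lemma exists_linExt_ofFn_eq [Fintype α] (hl : l ∈ linExtLists (univ : Finset α)) :
    ∃ f : α ≃ Fin (Fintype.card α), (∀ x y, x < y → f x < f y) ∧ List.ofFn f.symm = l := by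
  obtain ⟨hval, hpw⟩ := mem_linExtLists.1 hl
  have hnd : l.Nodup := Multiset.coe_nodup.1 (hval ▸ univ.nodup)
  have hmem : ∀ x, x ∈ l := fun x => (mem_iff_of_mem_linExtLists hl).2 (mem_univ x)
  have hlen : l.length = Fintype.card α := by
    rw [← Multiset.coe_card, hval, card_val, card_univ]
  set e := hnd.getEquivOfForallMemList l hmem
  refine ⟨e.symm.trans (finCongr hlen), fun x y hxy => ?_, ?_⟩
  · by_contra hle
    have hyx : e.symm y < e.symm x := by
      refine lt_of_le_of_ne ?_ fun h => hxy.ne (e.symm.injective h).symm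
      have := not_lt.1 hle
      simp only [Equiv.trans_apply, finCongr_apply, Fin.le_def, Fin.val_cast] at this
      exact Fin.le_def.2 this
    have hget : ∀ z, l.get (e.symm z) = z := e.apply_symm_apply
    exact hpw.rel_get_of_lt hyx (by rw [hget, hget]; exact hxy)
  · refine List.ext_get (by simp [hlen]) fun _ _ _ => ?_
    simp [e]

lemma card_linExtLists_univ_le_linExt [Fintype α] :
    #(linExtLists (univ : Finset α)) ≤ linExt α := by
  choose f hf using fun l : linExtLists (univ : Finset α) => exists_linExt_ofFn_eq l.2
  rw [← Nat.card_eq_finsetCard]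
  refine Nat.card_le_card_of_injective (fun l => ⟨f l, (hf l).1⟩) fun l l' h => ?_
  have h' : List.ofFn (f l).symm = List.ofFn (f l').symm := by
    rw [show f l = f l' from congrArg Subtype.val h]
  exact Subtype.ext ((hf l).2.symm.trans (h'.trans (hf l').2))

end LinExtList

end

theorem lower_bound_antichain_partition_general {α : Type*} [Fintype α] [PartialOrder α]
    (m : ℕ) (A : Fin m → Set α)
    (hanti : ∀ i, IsAntichain (· ≤ ·) (A i))
    (hdisj : ∀ i j, i ≠ j → Disjoint (A i) (A j)) :
    ∏ i : Fin m, Nat.factorial (A i).ncard ≤ linExt α := by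
  calc ∏ i, (A i).ncard ! = ∏ i, (#(A i).toFinset)! := by simp only [Set.ncard_eq_toFinset_card']
    _ ≤ #(LinExtList.linExtLists (univ : Finset α)) :=
        LinExtList.prod_factorial_card_le_card_linExtLists univ (fun i => (A i).toFinset)
          (fun _ _ => subset_univ _) (fun i _ => by simpa using hanti i)
          (fun i _ j _ hij => by simpa using hdisj i j hij)
    _ ≤ linExt α := LinExtList.card_linExtLists_univ_le_linExt

/-- **Lower bound for antichain partitions.**
If a finite poset `α` is partitioned into pairwise disjoint antichains
`A 0, …, A (m-1)`, then `e(α) ≥ ∏ i, |A i|!`. -/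
theorem lower_bound_antichain_partition {α : Type*} [Fintype α] [PartialOrder α]
    (m : ℕ) (A : Fin m → Set α)
    (hanti : ∀ i, IsAntichain (· ≤ ·) (A i))
    (hdisj : ∀ i j, i ≠ j → Disjoint (A i) (A j))
    (hcover : (⋃ i, A i) = Set.univ) :
    ∏ i : Fin m, Nat.factorial (A i).ncard ≤ linExt α :=
  lower_bound_antichain_partition_general m A hanti hdisj
end

section
/- Let X and Y be finite multisets of non-negative integers. Then X majorizes Y if and only if for every log-convex function f : {0,1,2,…} → (0,∞) one has ∏_{x ∈ X} f(x) ≥ ∏_{y ∈ Y} f(y). -/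
/-!
Taking logarithms, log-convex functions `f` are exactly `exp ∘ g` for `g : ℕ → ℝ` with `g 0 = 0`
and increasing increments. Such a `g` is a discrete Taylor expansion
`g x = Δg 0 * x + ∑ₜ Δ²g t * (x - (t + 1))₊` with nonnegative coefficients `Δ²g t`, so
`∑_X g - ∑_Y g` is a nonnegative combination of `X.sum - Y.sum` and of the differences of the
excesses `∑_{x ∈ Z} (x - t)₊`; conversely `x`, `-x` and `(x - t)₊` are themselves admissible.
Finally, majorization is equivalent to equal sums and domination of all excesses because the
partial sums and the excesses are Legendre duals: `sk Z k = min_t (k * t + excess Z t)` and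
`excess Z t = max_k (sk Z k - k * t)`.
-/

/-- `sk X k` is the sum of the `min(k, |X|)` largest elements of the
multiset `X` of non-negative integers. -/
def sk (X : Multiset ℕ) (k : ℕ) : ℕ := ((X.sort (· ≥ ·)).take k).sum

/-- `X` majorizes `Y`: the total sums agree and every partial sum of the
largest elements of `X` dominates the corresponding one of `Y`. -/
def Majorizes (X Y : Multiset ℕ) : Prop := X.sum = Y.sum ∧ ∀ k, sk Y k ≤ sk X k

/-- `f : ℕ → ℝ` is log-convex: positive, `f 0 = 1`, and the ratio
`f (x+1) / f x` is weakly increasing in `x`. -/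
def LogConvex (f : ℕ → ℝ) : Prop :=
  (∀ x, 0 < f x) ∧ f 0 = 1 ∧ Monotone fun x => f (x + 1) / f x

open Finset
open scoped fwdDiff

def excess (Z : Multiset ℕ) (t : ℕ) : ℕ := (Z.map (· - t)).sum

namespace List

theorem sum_map_tsub_eq_zero {l : List ℕ} {t : ℕ} (h : ∀ y ∈ l, y ≤ t) :
    (l.map (· - t)).sum = 0 := by
  simpa [List.sum_eq_zero_iff, Nat.sub_eq_zero_iff_le] using h

theorem sum_take_le_mul_add_sum_map_tsub : ∀ (l : List ℕ) (k t : ℕ),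
    (l.take k).sum ≤ k * t + (l.map (· - t)).sum
  | [], _, _ => by simp
  | _ :: _, 0, _ => by simp
  | x :: l, k + 1, t => by
    have ih := sum_take_le_mul_add_sum_map_tsub l k t
    simp only [take_succ_cons, sum_cons, map_cons]
    linarith [le_add_tsub (a := x) (b := t)]

theorem exists_sum_map_tsub_add_mul_le_sum_take :
    ∀ {l : List ℕ}, l.Pairwise (· ≥ ·) → ∀ t : ℕ,
      ∃ k, (l.map (· - t)).sum + k * t ≤ (l.take k).sum
  | [], _, _ => ⟨0, by simp⟩
  | x :: l, hl, t => by
    obtain ⟨hx, hl⟩ := pairwise_cons.1 hl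
    by_cases hxt : x ≤ t
    · refine ⟨0, le_of_eq ?_⟩
      simpa using sum_map_tsub_eq_zero fun y hy => (mem_cons.1 hy).elim (· ▸ hxt)
        fun hy => (hx y hy).trans hxt
    · obtain ⟨k, hk⟩ := exists_sum_map_tsub_add_mul_le_sum_take hl t
      refine ⟨k + 1, ?_⟩
      simp only [map_cons, sum_cons, take_succ_cons]
      have : x - t + t = x := by omega
      linarith

theorem exists_mul_add_sum_map_tsub_le_sum_take :
    ∀ {l : List ℕ}, l.Pairwise (· ≥ ·) → ∀ k : ℕ,
      ∃ t, (t = 0 ∨ t ∈ l) ∧ k * t + (l.map (· - t)).sum ≤ (l.take k).sum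
  | [], _, _ => ⟨0, Or.inl rfl, by simp⟩
  | x :: l, hl, 0 => by
    refine ⟨x, Or.inr mem_cons_self, le_of_eq ?_⟩
    simpa using sum_map_tsub_eq_zero fun y hy =>
      (mem_cons.1 hy).elim (·.le) ((pairwise_cons.1 hl).1 y)
  | x :: l, hl, k + 1 => by
    obtain ⟨hx, hl⟩ := pairwise_cons.1 hl
    obtain ⟨t, ht, hk⟩ := exists_mul_add_sum_map_tsub_le_sum_take hl k
    have htx : t ≤ x := ht.elim (· ▸ x.zero_le) (hx t)
    refine ⟨t, ht.imp_right (mem_cons_of_mem x), ?_⟩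
    simp only [map_cons, sum_cons, take_succ_cons]
    have : x - t + t = x := by omega
    linarith

end List

theorem excess_eq_sum_map_sort (Z : Multiset ℕ) (t : ℕ) :
    excess Z t = ((Z.sort (· ≥ ·)).map (· - t)).sum := by
  conv_lhs => rw [← Multiset.sort_eq Z (· ≥ ·)]
  rfl

theorem sk_le_mul_add_excess (Z : Multiset ℕ) (k t : ℕ) : sk Z k ≤ k * t + excess Z t := by
  rw [sk, excess_eq_sum_map_sort]
  exact List.sum_take_le_mul_add_sum_map_tsub _ k t

theorem exists_excess_add_mul_le_sk (Z : Multiset ℕ) (t : ℕ) :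
    ∃ k, excess Z t + k * t ≤ sk Z k := by
  simpa only [sk, excess_eq_sum_map_sort] using
    List.exists_sum_map_tsub_add_mul_le_sum_take (Z.pairwise_sort _) t

theorem exists_mul_add_excess_le_sk (Z : Multiset ℕ) (k : ℕ) :
    ∃ t, k * t + excess Z t ≤ sk Z k := by
  obtain ⟨t, -, ht⟩ := List.exists_mul_add_sum_map_tsub_le_sum_take (Z.pairwise_sort (· ≥ ·)) k
  exact ⟨t, by rwa [sk, excess_eq_sum_map_sort]⟩

theorem majorizes_iff_excess_le {X Y : Multiset ℕ} :
    Majorizes X Y ↔ X.sum = Y.sum ∧ ∀ t, excess Y t ≤ excess X t := by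
  refine and_congr_right fun _ => ⟨fun h t => ?_, fun h k => ?_⟩
  · obtain ⟨k, hk⟩ := exists_excess_add_mul_le_sk Y t
    have := sk_le_mul_add_excess X k t
    have := h k
    omega
  · obtain ⟨t, ht⟩ := exists_mul_add_excess_le_sk X k
    have := sk_le_mul_add_excess Y k t
    have := h t
    omega

section Convex

variable {R : Type*} [CommRing R]

theorem eq_add_mul_add_sum_fwdDiff_fwdDiff_mul_tsub (g : ℕ → R) (x : ℕ) :
    g x = g 0 + Δ_[1] g 0 * x + ∑ t ∈ range x, Δ_[1] (Δ_[1] g) t * ((x - (t + 1) : ℕ) : R) := by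
  induction x with
  | zero => simp
  | succ x ih =>
    have hshift : ∀ t ∈ range x,
        Δ_[1] (Δ_[1] g) t * ((x + 1 - (t + 1) : ℕ) : R) =
          Δ_[1] (Δ_[1] g) t * ((x - (t + 1) : ℕ) : R) + Δ_[1] (Δ_[1] g) t := by
      intro t ht
      rw [show x + 1 - (t + 1) = x - (t + 1) + 1 by grind]
      push_cast
      ring
    have htelescope : ∑ t ∈ range x, Δ_[1] (Δ_[1] g) t = Δ_[1] g x - Δ_[1] g 0 :=
      sum_range_sub (Δ_[1] g) x
    rw [sum_range_succ, Nat.sub_self, Nat.cast_zero, mul_zero, add_zero, sum_congr rfl hshift,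
      sum_add_distrib, htelescope]
    simp only [fwdDiff] at ih ⊢
    push_cast
    linear_combination ih

theorem sum_map_eq_add_mul_add_sum_fwdDiff_fwdDiff_mul_excess (g : ℕ → R) {Z : Multiset ℕ}
    {n : ℕ} (hZ : ∀ x ∈ Z, x ≤ n) :
    (Z.map g).sum = Z.card * g 0 + Δ_[1] g 0 * Z.sum +
      ∑ t ∈ range n, Δ_[1] (Δ_[1] g) t * excess Z (t + 1) := by
  have hg : ∀ x ∈ Z, g x = g 0 + Δ_[1] g 0 * x +
      ∑ t ∈ range n, Δ_[1] (Δ_[1] g) t * ((x - (t + 1) : ℕ) : R) := by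
    intro x hx
    rw [eq_add_mul_add_sum_fwdDiff_fwdDiff_mul_tsub g x]
    congr 1
    refine sum_subset (range_subset_range.2 (hZ x hx)) fun t _ ht => ?_
    rw [mem_range, not_lt] at ht
    simp [Nat.sub_eq_zero_of_le (Nat.le_succ_of_le ht)]
  rw [Multiset.map_congr rfl hg]
  simp [Multiset.sum_map_add, Multiset.sum_map_mul_left, Multiset.sum_map_sum, excess,
    Nat.cast_multiset_sum]

end Convex

theorem sum_map_le_sum_map_of_excess_le {R : Type*} [CommRing R] [PartialOrder R]
    [IsOrderedRing R] {g : ℕ → R} (hg0 : g 0 = 0) (hg : Monotone (Δ_[1] g))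
    {X Y : Multiset ℕ} (hsum : X.sum = Y.sum) (hexcess : ∀ t, excess Y t ≤ excess X t) :
    (Y.map g).sum ≤ (X.map g).sum := by
  have hX (x) (hx : x ∈ X) : x ≤ X.sum + Y.sum := (Multiset.le_sum_of_mem hx).trans le_self_add
  have hY (y) (hy : y ∈ Y) : y ≤ X.sum + Y.sum := (Multiset.le_sum_of_mem hy).trans le_add_self
  rw [sum_map_eq_add_mul_add_sum_fwdDiff_fwdDiff_mul_excess g hX,
    sum_map_eq_add_mul_add_sum_fwdDiff_fwdDiff_mul_excess g hY, hg0, hsum, mul_zero, mul_zero]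
  gcongr with t
  · exact sub_nonneg.2 (hg t.le_succ)
  · exact hexcess (t + 1)

theorem monotone_fwdDiff_natCast_tsub (t : ℕ) :
    Monotone (Δ_[1] fun x : ℕ => ((x - t : ℕ) : ℝ)) := by
  intro i j hij
  simp only [fwdDiff]
  rw [← Nat.cast_sub (by omega), ← Nat.cast_sub (by omega), Nat.cast_le]
  omega

theorem natCast_excess (Z : Multiset ℕ) (t : ℕ) :
    (excess Z t : ℝ) = (Z.map fun x => ((x - t : ℕ) : ℝ)).sum := by
  simp [excess, Nat.cast_multiset_sum]

theorem majorizes_iff_forall_sum_map_le {X Y : Multiset ℕ} :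
    Majorizes X Y ↔
      ∀ g : ℕ → ℝ, g 0 = 0 → Monotone (Δ_[1] g) → (Y.map g).sum ≤ (X.map g).sum := by
  rw [majorizes_iff_excess_le]
  refine ⟨fun ⟨hsum, hexcess⟩ g hg0 hg => sum_map_le_sum_map_of_excess_le hg0 hg hsum hexcess,
    fun h => ?_⟩
  have hexcess (t : ℕ) : excess Y t ≤ excess X t := by
    have := h _ (by simp) (monotone_fwdDiff_natCast_tsub t)
    rwa [← natCast_excess, ← natCast_excess, Nat.cast_le] at this
  have hneg := h (fun x => -(x : ℝ)) (by simp) (fun i j _ => by simp [fwdDiff])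
  rw [Multiset.sum_map_neg, Multiset.sum_map_neg, neg_le_neg_iff, ← Nat.cast_multiset_sum,
    ← Nat.cast_multiset_sum, Nat.cast_le] at hneg
  refine ⟨le_antisymm hneg ?_, hexcess⟩
  simpa [excess] using hexcess 0

theorem prod_map_exp_comp_le_iff {X Y : Multiset ℕ} (g : ℕ → ℝ) :
    (Y.map (Real.exp ∘ g)).prod ≤ (X.map (Real.exp ∘ g)).prod ↔
      (Y.map g).sum ≤ (X.map g).sum := by
  rw [← Multiset.map_map, ← Multiset.map_map, ← Real.exp_multiset_sum, ← Real.exp_multiset_sum,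
    Real.exp_le_exp]

theorem LogConvex.exp_comp_log {f : ℕ → ℝ} (hf : LogConvex f) : Real.exp ∘ Real.log ∘ f = f :=
  funext fun x => Real.exp_log (hf.1 x)

theorem LogConvex.log_zero {f : ℕ → ℝ} (hf : LogConvex f) : Real.log (f 0) = 0 := by
  rw [hf.2.1, Real.log_one]

theorem LogConvex.monotone_fwdDiff_log {f : ℕ → ℝ} (hf : LogConvex f) :
    Monotone (Δ_[1] (Real.log ∘ f)) := by
  intro i j hij
  simp only [fwdDiff, Function.comp_apply]
  rw [← Real.log_div (hf.1 _).ne' (hf.1 _).ne', ← Real.log_div (hf.1 _).ne' (hf.1 _).ne']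
  exact Real.log_le_log (div_pos (hf.1 _) (hf.1 _)) (hf.2.2 hij)

theorem logConvex_exp_comp {g : ℕ → ℝ} (hg0 : g 0 = 0) (hg : Monotone (Δ_[1] g)) :
    LogConvex (Real.exp ∘ g) := by
  refine ⟨fun x => Real.exp_pos _, by simp [hg0], fun i j hij => ?_⟩
  simp only [Function.comp_apply, ← Real.exp_sub]
  exact Real.exp_monotone (hg hij)

/-- **Karamata-type majorization criterion.** A finite multiset `X` of
non-negative integers majorizes `Y` if and only if
`∏_{x ∈ X} f x ≥ ∏_{y ∈ Y} f y` for every log-convex function `f`. -/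
theorem majorizes_iff_forall_logConvex (X Y : Multiset ℕ) :
    Majorizes X Y ↔ ∀ f : ℕ → ℝ, LogConvex f → (Y.map f).prod ≤ (X.map f).prod := by
  rw [majorizes_iff_forall_sum_map_le]
  refine ⟨fun h f hf => ?_, fun h g hg0 hg => ?_⟩
  · rw [← hf.exp_comp_log, prod_map_exp_comp_le_iff]
    exact h _ hf.log_zero hf.monotone_fwdDiff_log
  · rw [← prod_map_exp_comp_le_iff]
    exact h _ (logConvex_exp_comp hg0 hg)
end

section
/- Let X, Y, Z be finite multisets of non-negative integers with s(X) = s(Y). Then X majorizes Y if and only if the multiset union X ∪ Z majorizes the multiset union Y ∪ Z. -/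
/-!
With `excess X t = ∑_{x ∈ X} (x - t)` (truncated subtraction), `s_k(X) ≤ excess X t + k t` for
all `t`, with equality whenever `t` separates the `k` largest elements of `X` from the others.
Such a `t` exists for every `k`, and such a `k` for every `t`, so `s_k(Y) ≤ s_k(X)` for all `k`
is equivalent to `excess Y t ≤ excess X t` for all `t`. Both this and the equality of sums are
unchanged by adding `Z` to both multisets, because `excess` and `sum` are additive.
-/

namespace Majorization

def excess (X : Multiset ℕ) (t : ℕ) : ℕ := (X.map (· - t)).sum

@[simp]
lemma excess_add (X Y : Multiset ℕ) (t : ℕ) : excess (X + Y) t = excess X t + excess Y t := by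
  simp [excess]

lemma excess_eq_zero_of_forall_le {X : Multiset ℕ} {t : ℕ} (h : ∀ x ∈ X, x ≤ t) :
    excess X t = 0 :=
  Multiset.sum_eq_zero fun _ hx => by
    obtain ⟨x, hxX, rfl⟩ := Multiset.mem_map.mp hx
    exact Nat.sub_eq_zero_of_le (h x hxX)

lemma excess_add_card_mul (X : Multiset ℕ) (t : ℕ) :
    excess X t + X.card * t = (X.map (fun x => x - t + t)).sum := by
  simp [excess, Multiset.sum_map_add]

lemma sum_le_excess_add_card_mul (X : Multiset ℕ) (t : ℕ) : X.sum ≤ excess X t + X.card * t := by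
  rw [excess_add_card_mul]
  simpa using Multiset.sum_map_le_sum_map id (fun x => x - t + t) fun x _ => le_tsub_add

lemma sum_eq_excess_add_card_mul {X : Multiset ℕ} {t : ℕ} (h : ∀ x ∈ X, t ≤ x) :
    X.sum = excess X t + X.card * t := by
  rw [excess_add_card_mul, ← Multiset.map_id' X, Multiset.map_map]
  exact congrArg _ (Multiset.map_congr rfl fun x hx => (Nat.sub_add_cancel (h x hx)).symm)

lemma coe_take_add_coe_drop_sort (X : Multiset ℕ) (k : ℕ) :
    (((X.sort (· ≥ ·)).take k : List ℕ) : Multiset ℕ) + ((X.sort (· ≥ ·)).drop k : List ℕ) = X := by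
  rw [Multiset.coe_add, List.take_append_drop, Multiset.sort_eq]

lemma sk_le_excess_add_mul (X : Multiset ℕ) (k t : ℕ) : sk X k ≤ excess X t + k * t := by
  set T : Multiset ℕ := ↑((X.sort (· ≥ ·)).take k)
  have hcard : T.card ≤ k := by simp [T]
  calc sk X k = T.sum := (Multiset.sum_coe _).symm
    _ ≤ excess T t + T.card * t := sum_le_excess_add_card_mul T t
    _ ≤ excess X t + k * t := by
      rw [← coe_take_add_coe_drop_sort X k, excess_add]
      gcongr
      exact le_self_add

def SplitsAt (l : List ℕ) (k t : ℕ) : Prop := (∀ x ∈ l.take k, t ≤ x) ∧ ∀ x ∈ l.drop k, x ≤ t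

lemma sk_eq_excess_add_mul_of_splitsAt {X : Multiset ℕ} {k t : ℕ}
    (h : SplitsAt (X.sort (· ≥ ·)) k t) (hk : k ≤ X.card ∨ t = 0) :
    sk X k = excess X t + k * t := by
  set T : Multiset ℕ := ↑((X.sort (· ≥ ·)).take k)
  have hcard : T.card * t = k * t := by
    rcases hk with hk | rfl
    · simp [T, hk]
    · simp
  have hrest : excess ↑((X.sort (· ≥ ·)).drop k) t = 0 := excess_eq_zero_of_forall_le h.2
  calc sk X k = T.sum := (Multiset.sum_coe _).symm
    _ = excess T t + T.card * t := sum_eq_excess_add_card_mul h.1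
    _ = excess X t + k * t := by
      rw [← coe_take_add_coe_drop_sort X k, excess_add, hrest, hcard, add_zero]

lemma exists_index_splitsAt_of_pairwise {l : List ℕ} (hl : l.Pairwise (· ≥ ·)) (t : ℕ) :
    ∃ k ≤ l.length, SplitsAt l k t := by
  induction l with
  | nil => exact ⟨0, le_rfl, by simp [SplitsAt]⟩
  | cons a l ih =>
    obtain ⟨ha, hl⟩ := List.pairwise_cons.mp hl
    by_cases hat : a ≤ t
    · exact ⟨0, Nat.zero_le _, by simpa [SplitsAt] using ⟨hat, fun x hx => (ha x hx).trans hat⟩⟩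
    · obtain ⟨k, hk, htake, hdrop⟩ := ih hl
      exact ⟨k + 1, by simpa using hk, by simpa [SplitsAt] using ⟨(not_le.mp hat).le, htake⟩, hdrop⟩

lemma exists_level_splitsAt_of_pairwise {l : List ℕ} (hl : l.Pairwise (· ≥ ·)) (k : ℕ) :
    ∃ t, (k ≤ l.length ∨ t = 0) ∧ SplitsAt l k t := by
  cases hrest : l.drop k with
  | nil => exact ⟨0, Or.inr rfl, fun _ _ => Nat.zero_le _, by simp [hrest]⟩
  | cons d ds =>
    have hk : k ≤ l.length := by
      by_contra! hk
      simp [List.drop_eq_nil_of_le hk.le] at hrest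
    rw [← List.take_append_drop k l, hrest, List.pairwise_append] at hl
    refine ⟨d, Or.inl hk, fun x hx => hl.2.2 x hx d List.mem_cons_self, ?_⟩
    rw [hrest]
    rintro x (_ | ⟨_, hx⟩)
    exacts [le_rfl, List.rel_of_pairwise_cons hl.2.1 hx]

lemma exists_sk_eq_excess_add_mul (X : Multiset ℕ) (t : ℕ) :
    ∃ k, sk X k = excess X t + k * t := by
  obtain ⟨k, hk, hsplit⟩ := exists_index_splitsAt_of_pairwise (X.pairwise_sort (· ≥ ·)) t
  exact ⟨k, sk_eq_excess_add_mul_of_splitsAt hsplit (Or.inl (by simpa using hk))⟩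

lemma exists_level_sk_eq_excess_add_mul (X : Multiset ℕ) (k : ℕ) :
    ∃ t, sk X k = excess X t + k * t := by
  obtain ⟨t, hk, hsplit⟩ := exists_level_splitsAt_of_pairwise (X.pairwise_sort (· ≥ ·)) k
  exact ⟨t, sk_eq_excess_add_mul_of_splitsAt hsplit (by simpa using hk)⟩

lemma forall_sk_le_iff_forall_excess_le (X Y : Multiset ℕ) :
    (∀ k, sk Y k ≤ sk X k) ↔ ∀ t, excess Y t ≤ excess X t := by
  constructor
  · intro h t
    obtain ⟨k, hk⟩ := exists_sk_eq_excess_add_mul Y t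
    have := (hk ▸ h k).trans (sk_le_excess_add_mul X k t)
    omega
  · intro h k
    obtain ⟨t, ht⟩ := exists_level_sk_eq_excess_add_mul X k
    calc sk Y k ≤ excess Y t + k * t := sk_le_excess_add_mul Y k t
      _ ≤ excess X t + k * t := by gcongr; exact h t
      _ = sk X k := ht.symm

end Majorization

theorem majorizes_iff_add_general (X Y Z : Multiset ℕ) :
    Majorizes X Y ↔ Majorizes (X + Z) (Y + Z) := by
  simp only [Majorizes, Majorization.forall_sk_le_iff_forall_excess_le, Multiset.sum_add,
    Majorization.excess_add, add_le_add_iff_right, add_left_inj]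

/-- For finite multisets `X, Y, Z` of non-negative integers with
`s(X) = s(Y)`, `X` majorizes `Y` if and only if `X ∪ Z` majorizes `Y ∪ Z`
(multiset union adding multiplicities). -/
theorem majorizes_iff_add (X Y Z : Multiset ℕ) (hs : X.sum = Y.sum) :
    Majorizes X Y ↔ Majorizes (X + Z) (Y + Z) :=
  majorizes_iff_add_general X Y Z
end

section
/- Let X and Y be finite multisets of non-negative integers with s(Y) = s(X) − 1. Let x_i (respectively y_i) denote the i-th largest element of X (respectively Y), with x_i = 0 for i > |X| and y_i = 0 for i > |Y|. Assume that s_k(X) ≥ s_k(Y) ≥ s_k(X) − 1 for all k, and that there exists an index m such that s_k(X) = s_k(Y) for all k = 1, 2, …, m−1. Then x_m > 0, and Y majorizes the multiset obtained from X by removing one copy of x_m and adding one copy of x_m − 1. -/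
/-- `nthLargest X i` is the `i`-th largest element of the multiset `X`
(indexed from `i = 1`), padded by `0` for `i > |X|`. -/
def nthLargest (X : Multiset ℕ) (i : ℕ) : ℕ := (X.sort (· ≥ ·)).getD (i - 1) 0

lemma sort_coe_of_pairwise {l : List ℕ} (hl : l.Pairwise (· ≥ ·)) :
    (l : Multiset ℕ).sort (· ≥ ·) = l :=
  List.Perm.eq_of_pairwise' (Multiset.pairwise_sort _ _) hl
    (by rw [← Multiset.coe_eq_coe, Multiset.sort_eq])

lemma sort_cons_erase_eq {X : Multiset ℕ} {A B : List ℕ} {c d : ℕ}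
    (hX : X.sort (· ≥ ·) = A ++ c :: B) (hdc : d ≤ c) (hB : ∀ b ∈ B, b ≤ d) :
    (d ::ₘ X.erase c).sort (· ≥ ·) = A ++ d :: B := by
  have hXAB : X = c ::ₘ ↑(A ++ B) := by
    rw [← Multiset.sort_eq X (· ≥ ·), hX, Multiset.cons_coe, Multiset.coe_eq_coe]
    exact List.perm_middle
  have hsorted := Multiset.pairwise_sort X (· ≥ ·)
  rw [hX, List.pairwise_append, List.pairwise_cons] at hsorted
  obtain ⟨hA, ⟨-, hB'⟩, hAcB⟩ := hsorted
  rw [hXAB, Multiset.erase_cons_head, Multiset.cons_coe,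
    Multiset.coe_eq_coe.mpr List.perm_middle.symm]
  refine sort_coe_of_pairwise (List.pairwise_append.mpr ⟨hA, List.pairwise_cons.mpr ⟨hB, hB'⟩, ?_⟩)
  intro a ha b hb
  rcases List.mem_cons.mp hb with rfl | hb
  · exact (hAcB a ha c List.mem_cons_self).trans' hdc
  · exact hAcB a ha b (List.mem_cons_of_mem _ hb)

lemma List.sum_take_append_cons_add {A B : List ℕ} {c d k : ℕ} (hk : A.length < k) :
    ((A ++ d :: B).take k).sum + c = ((A ++ c :: B).take k).sum + d := by
  obtain ⟨n, rfl⟩ : ∃ n, k = A.length + (n + 1) := ⟨k - A.length - 1, by omega⟩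
  simp only [List.take_append, List.take_of_length_le (by omega : A.length ≤ A.length + (n + 1)),
    Nat.add_sub_cancel_left, List.take_succ_cons, List.sum_append, List.sum_cons]
  omega

lemma sk_succ (X : Multiset ℕ) (k : ℕ) :
    sk X (k + 1) = sk X k + nthLargest X (k + 1) := by
  unfold sk nthLargest
  rw [List.take_add_one, List.sum_append, Nat.add_sub_cancel, List.getD_eq_getElem?_getD]
  cases (X.sort (· ≥ ·))[k]? <;> simp

lemma sum_sort_ge (X : Multiset ℕ) : (X.sort (· ≥ ·)).sum = X.sum := by
  rw [← Multiset.sum_coe, Multiset.sort_eq]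

lemma sk_le_sum (X : Multiset ℕ) (k : ℕ) : sk X k ≤ X.sum := by
  rw [← sum_sort_ge, ← List.take_append_drop k (X.sort (· ≥ ·)), List.sum_append]
  exact Nat.le_add_right _ _

lemma nthLargest_antitone (X : Multiset ℕ) : Antitone (nthLargest X) := by
  intro i j hij
  unfold nthLargest
  by_cases hj : j - 1 < (X.sort (· ≥ ·)).length
  · rw [List.getD_eq_getElem _ _ hj, List.getD_eq_getElem _ _ (by omega)]
    rcases (Nat.sub_le_sub_right hij 1).lt_or_eq with hlt | heq
    · exact List.pairwise_iff_getElem.mp (Multiset.pairwise_sort X _) _ _ (by omega) hj hlt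
    · simp only [heq, le_refl]
  · rw [List.getD_eq_default _ _ (by omega)]
    exact Nat.zero_le _

lemma nthLargest_succ_eq_getElem {X : Multiset ℕ} {i : ℕ} (hi : i < (X.sort (· ≥ ·)).length) :
    nthLargest X (i + 1) = (X.sort (· ≥ ·))[i] := by
  rw [nthLargest, Nat.add_sub_cancel, List.getD_eq_getElem _ _ hi]

lemma nthLargest_eq_zero_of_card_lt {X : Multiset ℕ} {i : ℕ} (hi : Multiset.card X < i) :
    nthLargest X i = 0 :=
  List.getD_eq_default _ _ (by rw [Multiset.length_sort]; omega)

lemma le_nthLargest_of_mem_drop {X : Multiset ℕ} {k b : ℕ}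
    (hb : b ∈ (X.sort (· ≥ ·)).drop k) : b ≤ nthLargest X (k + 1) := by
  obtain ⟨i, hi, rfl⟩ := List.mem_iff_getElem.mp hb
  rw [List.length_drop] at hi
  rw [List.getElem_drop, ← nthLargest_succ_eq_getElem (by omega)]
  exact nthLargest_antitone X (by omega)

lemma nthLargest_succ_pos_of_sk_lt_sum {X : Multiset ℕ} {k : ℕ} (h : sk X k < X.sum) :
    0 < nthLargest X (k + 1) := by
  by_contra! hzero
  have hdrop : ((X.sort (· ≥ ·)).drop k).sum = 0 :=
    List.sum_eq_zero fun b hb => Nat.le_zero.mp ((le_nthLargest_of_mem_drop hb).trans hzero)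
  rw [← sum_sort_ge, ← List.take_append_drop k (X.sort (· ≥ ·)), List.sum_append, hdrop,
    Nat.add_zero, sk] at h
  exact h.false

lemma exists_sort_eq_append_nthLargest_cons {X : Multiset ℕ} {j : ℕ} (hj : 1 ≤ j)
    (hjX : j ≤ Multiset.card X) :
    ∃ A B : List ℕ, X.sort (· ≥ ·) = A ++ nthLargest X j :: B ∧ A.length = j - 1 ∧
      ∀ b ∈ B, b ≤ nthLargest X (j + 1) := by
  have hlen : j - 1 < (X.sort (· ≥ ·)).length := by rw [Multiset.length_sort]; omega
  refine ⟨(X.sort (· ≥ ·)).take (j - 1), (X.sort (· ≥ ·)).drop j, ?_,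
    by rw [List.length_take]; omega, fun _ => le_nthLargest_of_mem_drop⟩
  conv_lhs => rw [← List.take_append_drop (j - 1) (X.sort (· ≥ ·)), List.drop_eq_getElem_cons hlen]
  rw [← nthLargest_succ_eq_getElem hlen, Nat.sub_add_cancel hj]

section ReplaceNthLargest

variable {X : Multiset ℕ} {j d : ℕ} (hj : 1 ≤ j) (hjX : j ≤ Multiset.card X)
  (hd : nthLargest X (j + 1) ≤ d) (hdj : d ≤ nthLargest X j)
include hj hjX hd hdj

lemma exists_sort_eq_and_sort_cons_erase_nthLargest_eq :
    ∃ A B : List ℕ, A.length = j - 1 ∧ X.sort (· ≥ ·) = A ++ nthLargest X j :: B ∧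
      (d ::ₘ X.erase (nthLargest X j)).sort (· ≥ ·) = A ++ d :: B := by
  obtain ⟨A, B, hX, hA, hB⟩ := exists_sort_eq_append_nthLargest_cons hj hjX
  exact ⟨A, B, hA, hX, sort_cons_erase_eq hX hdj fun b hb => (hB b hb).trans hd⟩

lemma sk_cons_erase_nthLargest_of_lt {k : ℕ} (hk : k < j) :
    sk (d ::ₘ X.erase (nthLargest X j)) k = sk X k := by
  obtain ⟨A, B, hA, hX, hX'⟩ := exists_sort_eq_and_sort_cons_erase_nthLargest_eq hj hjX hd hdj
  rw [sk, sk, hX, hX', List.take_append_of_le_length (by omega),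
    List.take_append_of_le_length (by omega)]

lemma sk_cons_erase_nthLargest_add_of_le {k : ℕ} (hk : j ≤ k) :
    sk (d ::ₘ X.erase (nthLargest X j)) k + nthLargest X j = sk X k + d := by
  obtain ⟨A, B, hA, hX, hX'⟩ := exists_sort_eq_and_sort_cons_erase_nthLargest_eq hj hjX hd hdj
  rw [sk, sk, hX, hX']
  exact List.sum_take_append_cons_add (by omega)

lemma sum_cons_erase_nthLargest :
    (d ::ₘ X.erase (nthLargest X j)).sum + nthLargest X j = X.sum + d := by
  obtain ⟨A, B, -, hX, hX'⟩ := exists_sort_eq_and_sort_cons_erase_nthLargest_eq hj hjX hd hdj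
  rw [← sum_sort_ge, ← sum_sort_ge X, hX, hX']
  simp only [List.sum_append, List.sum_cons]
  omega

end ReplaceNthLargest

lemma Antitone.exists_eq_and_succ_lt {f : ℕ → ℕ} (hf : Antitone f) {m n : ℕ} (hn : f n < f m) :
    ∃ j, m ≤ j ∧ f j = f m ∧ f (j + 1) < f m := by
  by_contra! h
  have hge : ∀ i, f m ≤ f (m + i) := by
    intro i
    induction i with
    | zero => rfl
    | succ i ih =>
      exact h (m + i) (Nat.le_add_right m i) (le_antisymm (hf (Nat.le_add_right m i)) ih)
  exact (hn.trans_le ((hge n).trans (hf (by omega)))).false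

lemma sk_succ_eq_of_nthLargest_succ_eq {X Y : Multiset ℕ} {k : ℕ} (hk : sk X k = sk Y k)
    (hx : nthLargest X (k + 2) = nthLargest X (k + 1)) (hup : sk Y (k + 1) ≤ sk X (k + 1))
    (hdown : sk X (k + 2) ≤ sk Y (k + 2) + 1) : sk X (k + 1) = sk Y (k + 1) := by
  have hy : nthLargest Y (k + 2) ≤ nthLargest Y (k + 1) := nthLargest_antitone Y (by omega)
  have := sk_succ X k
  have := sk_succ Y k
  have : sk X (k + 2) = sk X (k + 1) + nthLargest X (k + 2) := sk_succ X (k + 1)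
  have : sk Y (k + 2) = sk Y (k + 1) + nthLargest Y (k + 2) := sk_succ Y (k + 1)
  omega

lemma sk_eq_of_lt_of_nthLargest_eq {X Y : Multiset ℕ} {m j : ℕ}
    (hup : ∀ k, sk Y k ≤ sk X k) (hdown : ∀ k, sk X k ≤ sk Y k + 1)
    (heq : ∀ k, k ≤ m - 1 → sk X k = sk Y k) (hj : nthLargest X j = nthLargest X m) :
    ∀ k < j, sk X k = sk Y k := by
  intro k
  induction k with
  | zero => exact fun _ => heq 0 (Nat.zero_le _)
  | succ k ih =>
    intro hk
    by_cases hkm : k + 1 ≤ m - 1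
    · exact heq _ hkm
    refine sk_succ_eq_of_nthLargest_succ_eq (ih (by omega)) ?_ (hup _) (hdown _)
    have := nthLargest_antitone X (show k + 1 ≤ k + 2 by omega)
    have := nthLargest_antitone X (show m ≤ k + 1 by omega)
    have := nthLargest_antitone X (show k + 2 ≤ j by omega)
    omega

/-- Let `X, Y` be finite multisets of non-negative integers with
`s(Y) = s(X) - 1`. Assume `s_k(X) ≥ s_k(Y) ≥ s_k(X) - 1` for all `k`, and that
`s_k(X) = s_k(Y)` for `k = 1, …, m-1`. Then the `m`-th largest element `x_m`
of `X` is positive, and `Y` majorizes the multiset obtained from `X` by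
replacing one copy of `x_m` with `x_m - 1`. -/
theorem majorizes_of_decrease (X Y : Multiset ℕ) (m : ℕ) (hm : 1 ≤ m)
    (hsum : X.sum = Y.sum + 1)
    (hup : ∀ k, sk Y k ≤ sk X k)
    (hdown : ∀ k, sk X k ≤ sk Y k + 1)
    (heq : ∀ k, k ≤ m - 1 → sk X k = sk Y k) :
    0 < nthLargest X m ∧
      Majorizes Y ((nthLargest X m - 1) ::ₘ X.erase (nthLargest X m)) := by
  have hpos : 0 < nthLargest X m := by
    have := heq (m - 1) le_rfl
    have := sk_le_sum Y (m - 1)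
    simpa only [Nat.sub_add_cancel hm] using
      nthLargest_succ_pos_of_sk_lt_sum (X := X) (k := m - 1) (by omega)
  obtain ⟨j, hmj, hj, hj_succ⟩ := (nthLargest_antitone X).exists_eq_and_succ_lt
    (m := m) (n := Multiset.card X + 1) (by rwa [nthLargest_eq_zero_of_card_lt (by omega)])
  have hjX : j ≤ Multiset.card X := by
    by_contra! hlt
    rw [nthLargest_eq_zero_of_card_lt hlt] at hj
    omega
  have hagree := sk_eq_of_lt_of_nthLargest_eq hup hdown heq hj
  rw [← hj]
  have hd : nthLargest X (j + 1) ≤ nthLargest X j - 1 := by omega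
  refine ⟨hj ▸ hpos, ?_, fun k => ?_⟩
  · have := sum_cons_erase_nthLargest (by omega) hjX hd (Nat.sub_le _ 1)
    omega
  · rcases lt_or_ge k j with hk | hk
    · rw [sk_cons_erase_nthLargest_of_lt (by omega) hjX hd (Nat.sub_le _ 1) hk, hagree k hk]
    · have := sk_cons_erase_nthLargest_add_of_le (by omega) hjX hd (Nat.sub_le _ 1) hk
      have := hdown k
      omega
end

section
/- Let P be a finite poset and let A ⊆ P be an antichain. Then the number of linear extensions satisfies e(P) ≥ ∑_{x ∈ A} e(P − x), where P − x denotes the poset P with the element x removed. -/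
open Finset

section LinearExtension

variable {β : Type*}

section Bottom

variable [DecidableEq β] {n : ℕ}

def equivOfApplyEqZero (m : β) :
    {f : β ≃ Fin (n + 1) // f m = 0} ≃ ({y // y ≠ m} ≃ Fin n) :=
  ((Equiv.subtypeEquiv (Equiv.equivCongr (Equiv.optionSubtypeNe m).symm (.refl _))
    fun f => by simp).trans (Equiv.optionSubtype 0)).trans
    (Equiv.equivCongr (.refl _) (finSuccAboveEquiv 0).symm)

theorem succ_equivOfApplyEqZero_apply (m : β) (f : {f : β ≃ Fin (n + 1) // f m = 0})
    (y : {y // y ≠ m}) : (equivOfApplyEqZero m f y).succ = f.1 y := by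
  have h (z : {j : Fin (n + 1) // j ≠ 0}) : ((finSuccAboveEquiv 0).symm z).succ = z := by
    obtain ⟨i, rfl⟩ := (finSuccAboveEquiv 0).surjective z
    rw [Equiv.symm_apply_apply, finSuccAboveEquiv_apply]
    exact congrFun Fin.succAbove_zero.symm i
  rw [equivOfApplyEqZero, Equiv.trans_apply, Equiv.equivCongr_apply_apply, h]
  simp

variable [PartialOrder β]

theorem strictMono_iff_equivOfApplyEqZero {m : β} (hm : IsMin m)
    (f : {f : β ≃ Fin (n + 1) // f m = 0}) :
    StrictMono f.1 ↔ StrictMono (equivOfApplyEqZero m f) := by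
  have hsucc := succ_equivOfApplyEqZero_apply m f
  refine ⟨fun hf y z hyz => ?_, fun hg x z hxz => ?_⟩
  · rw [← Fin.succ_lt_succ_iff, hsucc, hsucc]
    exact hf hyz
  · have hz : z ≠ m := fun h => hm.not_lt (h ▸ hxz)
    by_cases hx : x = m
    · rw [hx, f.2, ← hsucc ⟨z, hz⟩]
      exact Fin.succ_pos _
    · rw [← hsucc ⟨x, hx⟩, ← hsucc ⟨z, hz⟩, Fin.succ_lt_succ_iff]
      exact hg (Subtype.mk_lt_mk.2 hxz)

theorem card_strictMono_apply_eq_zero {m : β} (hm : IsMin m) :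
    Nat.card {f : β ≃ Fin (n + 1) // f m = 0 ∧ StrictMono f} =
      Nat.card {g : {y // y ≠ m} ≃ Fin n // StrictMono g} :=
  Nat.card_congr <| (Equiv.subtypeSubtypeEquivSubtypeInter _ _).symm.trans <|
    Equiv.subtypeEquiv (equivOfApplyEqZero m) (strictMono_iff_equivOfApplyEqZero hm)

end Bottom

variable [Fintype β] [PartialOrder β]

theorem linExt_eq_card_strictMono {n : ℕ} (h : Fintype.card β = n) :
    linExt β = Nat.card {f : β ≃ Fin n // StrictMono f} := by
  subst h; rfl

theorem linExt_congr {γ : Type*} [Fintype γ] [PartialOrder γ] (e : β ≃o γ) :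
    linExt β = linExt γ := by
  rw [linExt_eq_card_strictMono (Fintype.card_congr e.toEquiv), linExt_eq_card_strictMono rfl]
  exact Nat.card_congr <| Equiv.subtypeEquiv (Equiv.equivCongr e.toEquiv (.refl _)) fun f =>
    ⟨fun hf => hf.comp e.symm.strictMono, fun hf => by
      convert hf.comp e.strictMono; ext; simp⟩

open Classical in
theorem linExt_eq_sum_isMin [DecidableEq β] [Nonempty β] :
    linExt β = ∑ m : β with IsMin m, linExt {y // y ≠ m} := by
  classical
  obtain ⟨n, hn⟩ : ∃ n, Fintype.card β = n + 1 :=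
    Nat.exists_eq_add_one_of_ne_zero (Fintype.card_ne_zero (α := β))
  have hcard (m : β) : Fintype.card {y // y ≠ m} = n := by
    have := Fintype.card_congr (Equiv.optionSubtypeNe m)
    rw [Fintype.card_option] at this
    omega
  rw [linExt_eq_card_strictMono hn, Nat.card_eq_fintype_card, Fintype.card_subtype,
    card_eq_sum_card_fiberwise (f := fun f => f.symm 0) (t := {m | IsMin m})]
  · refine sum_congr rfl fun m hm => ?_
    rw [linExt_eq_card_strictMono (hcard m), ← card_strictMono_apply_eq_zero (mem_filter.1 hm).2,
      Nat.card_eq_fintype_card, Fintype.card_subtype, filter_filter]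
    simp only [Equiv.symm_apply_eq, eq_comm (a := (0 : Fin _)), and_comm]
  · intro f hf
    simp only [coe_filter, mem_univ, true_and, Set.mem_ofPred_eq] at hf ⊢
    exact hf.isMin_of_apply (by rw [f.apply_symm_apply]; exact fun b _ => Fin.zero_le b)

end LinearExtension

section FinsetPoset

variable {α : Type*} [PartialOrder α]

namespace Finset

open Classical in
noncomputable def minimals (s : Finset α) : Finset α := {m ∈ s | Minimal (· ∈ s) m}

variable {s : Finset α} {x : α}

theorem mem_minimals : x ∈ s.minimals ↔ Minimal (· ∈ s) x := by
  simpa [minimals] using fun h => h.prop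

theorem minimals_subset : s.minimals ⊆ s := fun _ hx => (mem_minimals.1 hx).prop

variable [DecidableEq α] {c : α}

theorem minimal_or_lt_of_minimal_erase (h : Minimal (· ∈ s.erase c) x) :
    Minimal (· ∈ s) x ∨ c < x := by
  rw [or_iff_not_imp_right]
  intro hcx
  rw [minimal_iff_forall_lt] at h ⊢
  refine ⟨mem_of_mem_erase h.1, fun y hy hys => h.2 hy (mem_erase.2 ⟨?_, hys⟩)⟩
  rintro rfl
  exact hcx hy

theorem minimals_erase_of_notMem_minimals (hx : x ∈ s) (hxs : x ∉ s.minimals) :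
    (s.erase x).minimals = s.minimals := by
  obtain ⟨w, hwx, hws⟩ : ∃ w < x, w ∈ s := by
    simpa [mem_minimals, minimal_iff_forall_lt, hx] using hxs
  ext m
  simp only [mem_minimals]
  refine ⟨fun hm => (minimal_or_lt_of_minimal_erase hm).resolve_right fun hxm => ?_, fun hm => ?_⟩
  · exact (minimal_iff_forall_lt.1 hm).2 (hwx.trans hxm) (mem_erase.2 ⟨hwx.ne, hws⟩)
  · refine hm.mono (fun _ => mem_of_mem_erase) (mem_erase.2 ⟨?_, hm.prop⟩)
    rintro rfl
    exact hxs (mem_minimals.2 hm)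

end Finset

variable [DecidableEq α] {s A : Finset α}

theorem linExt_finset_eq_sum_minimals (hs : s.Nonempty) :
    linExt s = ∑ m ∈ s.minimals, linExt (s.erase m) := by
  classical
  have : Nonempty s := hs.to_subtype
  rw [linExt_eq_sum_isMin, sum_filter, Finset.minimals, sum_filter, ← sum_coe_sort s]
  refine sum_congr rfl fun m _ => ?_
  have hmin : IsMin m ↔ Minimal (· ∈ s) m.1 := by rw [← minimal_true, minimal_true_subtype]
  have herase : linExt {y // y ≠ m} = linExt (s.erase m) := linExt_congr
    { toFun y := ⟨y.1.1, mem_erase.2 ⟨fun h => y.2 (Subtype.ext h), y.1.2⟩⟩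
      invFun y :=
        ⟨⟨y.1, mem_of_mem_erase y.2⟩, fun h => ne_of_mem_erase y.2 (congrArg Subtype.val h)⟩
      left_inv _ := rfl
      right_inv _ := rfl
      map_rel_iff' := Iff.rfl }
  simp only [hmin, herase]

theorem sum_linExt_erase_le_iff (hAs : A ⊆ s) :
    ∑ x ∈ A, linExt (s.erase x) ≤ linExt s ↔
      ∑ x ∈ A \ s.minimals, linExt (s.erase x) ≤ ∑ m ∈ s.minimals \ A, linExt (s.erase m) := by
  obtain rfl | hs := s.eq_empty_or_nonempty
  · simp [subset_empty.1 hAs]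
  rw [linExt_finset_eq_sum_minimals hs, ← sum_inter_add_sum_sdiff A s.minimals,
    ← sum_inter_add_sum_sdiff s.minimals A, inter_comm, add_le_add_iff_left]

theorem sum_linExt_erase_erase_le {c : α} (hAs : A ⊆ s) (hA : IsAntichain (· ≤ ·) (A : Set α))
    (hcA : c ∈ A) (hcs : c ∈ s.minimals)
    (ih : ∀ B ⊆ s.erase c, IsAntichain (· ≤ ·) (B : Set α) →
      ∑ x ∈ B, linExt ((s.erase c).erase x) ≤ linExt (s.erase c)) :
    ∑ x ∈ A \ s.minimals, linExt ((s.erase c).erase x) ≤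
      ∑ m ∈ s.minimals \ A, linExt ((s.erase c).erase m) := by
  set t := s.erase c
  set B := A.erase c ∪ (t.minimals \ s.minimals)
  have lt_of_mem_minimals {x} (hx : x ∈ t.minimals \ s.minimals) : c < x := by
    rw [mem_sdiff, mem_minimals, mem_minimals] at hx
    exact (minimal_or_lt_of_minimal_erase hx.1).resolve_left hx.2
  have hBt : B ⊆ t := union_subset (erase_subset_erase c hAs) (sdiff_subset.trans minimals_subset)
  have hB : IsAntichain (· ≤ ·) (B : Set α) := by
    intro x hx y hy hxy hle
    rw [mem_coe, mem_union] at hx hy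
    obtain hy | hy := hy
    · obtain hx | hx := hx
      · exact hA (mem_of_mem_erase hx) (mem_of_mem_erase hy) hxy hle
      · exact hA hcA (mem_of_mem_erase hy) (ne_of_mem_erase hy).symm
          ((lt_of_mem_minimals hx).le.trans hle)
    · exact hxy ((mem_minimals.1 (mem_sdiff.1 hy).1).eq_of_le (hBt (mem_union.2 hx)) hle)
  have hlow : A \ s.minimals ⊆ B \ t.minimals := by
    intro x hx
    obtain ⟨hxA, hxs⟩ := mem_sdiff.1 hx
    have hxc : x ≠ c := by rintro rfl; exact hxs hcs
    refine mem_sdiff.2 ⟨mem_union_left _ (mem_erase.2 ⟨hxc, hxA⟩), fun hxt => ?_⟩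
    exact hA hcA hxA hxc.symm (lt_of_mem_minimals (mem_sdiff.2 ⟨hxt, hxs⟩)).le
  have hhigh : t.minimals \ B ⊆ s.minimals \ A := by
    intro m hm
    simp only [B, mem_sdiff, mem_union, mem_erase, not_or, not_and, not_not] at hm
    have hmc : m ≠ c := ne_of_mem_erase (minimals_subset hm.1)
    exact mem_sdiff.2 ⟨hm.2.2 hm.1, fun hmA => hm.2.1 hmc hmA⟩
  calc _ ≤ ∑ x ∈ B \ t.minimals, linExt (t.erase x) := sum_le_sum_of_subset hlow
    _ ≤ ∑ m ∈ t.minimals \ B, linExt (t.erase m) := (sum_linExt_erase_le_iff hBt).1 (ih B hBt hB)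
    _ ≤ _ := sum_le_sum_of_subset hhigh

theorem sum_linExt_erase_le (hAs : A ⊆ s) (hA : IsAntichain (· ≤ ·) (A : Set α)) :
    ∑ x ∈ A, linExt (s.erase x) ≤ linExt s := by
  induction s using Finset.strongInduction generalizing A with
  | H s ih =>
  rw [sum_linExt_erase_le_iff hAs]
  set M := s.minimals
  have h_expand : ∀ x ∈ A \ M, linExt (s.erase x) = ∑ m ∈ M, linExt ((s.erase m).erase x) := by
    intro x hx
    obtain ⟨hxA, hxM⟩ := mem_sdiff.1 hx
    obtain ⟨w, hwx, hws⟩ : ∃ w < x, w ∈ s := by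
      simpa [M, mem_minimals, minimal_iff_forall_lt, hAs hxA] using hxM
    rw [linExt_finset_eq_sum_minimals ⟨w, mem_erase.2 ⟨hwx.ne, hws⟩⟩,
      minimals_erase_of_notMem_minimals (hAs hxA) hxM]
    exact sum_congr rfl fun m _ => by rw [erase_right_comm]
  have h_out : ∀ m ∈ M \ A, ∑ x ∈ A \ M, linExt ((s.erase m).erase x) +
      ∑ c ∈ M ∩ A, linExt ((s.erase m).erase c) ≤ linExt (s.erase m) := by
    intro m hm
    obtain ⟨hmM, hmA⟩ := mem_sdiff.1 hm
    rw [add_comm, inter_comm, sum_inter_add_sum_sdiff]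
    exact ih _ (erase_ssubset (minimals_subset hmM))
      (fun x hx => mem_erase.2 ⟨ne_of_mem_of_not_mem hx hmA, hAs hx⟩) hA
  have h_in : ∀ c ∈ M ∩ A, ∑ x ∈ A \ M, linExt ((s.erase c).erase x) ≤
      ∑ m ∈ M \ A, linExt ((s.erase m).erase c) := by
    intro c hc
    obtain ⟨hcM, hcA⟩ := mem_inter.1 hc
    refine (sum_linExt_erase_erase_le hAs hA hcA hcM fun B hB => ?_).trans_eq
      (sum_congr rfl fun m _ => by rw [erase_right_comm])
    exact ih _ (erase_ssubset (minimals_subset hcM)) hB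
  calc ∑ x ∈ A \ M, linExt (s.erase x)
      = ∑ m ∈ M, ∑ x ∈ A \ M, linExt ((s.erase m).erase x) := by
        rw [sum_congr rfl h_expand, sum_comm]
    _ = ∑ c ∈ M ∩ A, ∑ x ∈ A \ M, linExt ((s.erase c).erase x) +
          ∑ m ∈ M \ A, ∑ x ∈ A \ M, linExt ((s.erase m).erase x) :=
        (sum_inter_add_sum_sdiff _ _ _).symm
    _ ≤ ∑ c ∈ M ∩ A, ∑ m ∈ M \ A, linExt ((s.erase m).erase c) +
          ∑ m ∈ M \ A, ∑ x ∈ A \ M, linExt ((s.erase m).erase x) := by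
        gcongr with c hc
        exact h_in c hc
    _ = ∑ m ∈ M \ A, (∑ x ∈ A \ M, linExt ((s.erase m).erase x) +
          ∑ c ∈ M ∩ A, linExt ((s.erase m).erase c)) := by
        rw [sum_comm, add_comm, sum_add_distrib]
    _ ≤ ∑ m ∈ M \ A, linExt (s.erase m) := sum_le_sum h_out

end FinsetPoset

/-- If `A` is an antichain in a finite poset `α`, then
`e(α) ≥ ∑_{x ∈ A} e(α - x)`, where `α - x` is the induced subposet on the
complement of `x`. -/
theorem linExt_ge_sum_antichain {α : Type*} [Fintype α] [DecidableEq α] [PartialOrder α]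
    (A : Finset α) (hA : IsAntichain (· ≤ ·) (A : Set α)) :
    ∑ x ∈ A, linExt {y : α // y ≠ x} ≤ linExt α := by
  have h_univ : linExt α = linExt (univ : Finset α) :=
    linExt_congr ⟨(Equiv.subtypeUnivEquiv mem_univ).symm, Iff.rfl⟩
  have h_erase (x : α) : linExt {y // y ≠ x} = linExt (univ.erase x) :=
    linExt_congr ⟨Equiv.subtypeEquivRight fun y => by simp, Iff.rfl⟩
  simpa only [h_univ, h_erase] using sum_linExt_erase_le (subset_univ A) hA
end

section
/- Let n be a positive integer and let a_1 ≥ a_2 ≥ … and c_1 ≥ c_2 ≥ … be two conjugate partitions of n into positive integer parts. Then ∏_i a_i! · ∏_i c_i! ≥ (n / (e·H_n))^n, where H_n = 1 + 1/2 + … + 1/n is the n-th harmonic number and e is Euler's number. -/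
/-!
Counting the cells of the Young diagram column by column gives `∏ aᵢ! = ∏ₖ (k+1)^{cₖ}`.
For every `t ≥ 0`, applying `xᵐ / m! ≤ eˣ` to `x = t / (k+1)`, `m = cₖ` and multiplying over `k`
gives `tⁿ ≤ ∏ aᵢ! · ∏ cₖ! · e^{t Hₙ}`; the choice `t = n / Hₙ` is the bound.
-/

open Finset Real
open scoped Nat

section ColumnLength

def columnLength (a : ℕ → ℕ) (N k : ℕ) : ℕ := #{i ∈ range N | k < a i}

variable {a : ℕ → ℕ} {N M : ℕ}

theorem card_setOf_succ_le_eq_columnLength (hzero : ∀ i, N ≤ i → a i = 0) (k : ℕ) :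
    Nat.card {i : ℕ | k + 1 ≤ a i} = columnLength a N k := by
  have hset : {i : ℕ | k + 1 ≤ a i} = ↑({i ∈ range N | k < a i} : Finset ℕ) := by
    ext i
    simp only [Set.mem_ofPred_eq, coe_filter, mem_range]
    refine ⟨fun h => ⟨?_, h⟩, And.right⟩
    by_contra hi
    have := hzero i (not_lt.1 hi)
    omega
  rw [hset, Nat.card_coe_set_eq, Set.ncard_coe_finset, columnLength]

@[to_additive]
theorem prod_prod_range_eq_prod_pow_columnLength {β : Type*} [CommMonoid β] (f : ℕ → β)
    (hM : ∀ i ∈ range N, a i ≤ M) :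
    ∏ i ∈ range N, ∏ k ∈ range (a i), f k = ∏ k ∈ range M, f k ^ columnLength a N k := by
  have hrow : ∀ i ∈ range N, ∏ k ∈ range (a i), f k =
      ∏ k ∈ range M, if k < a i then f k else 1 := by
    intro i hi
    rw [← prod_filter]
    congr 1
    ext k
    simp only [mem_filter, mem_range]
    have := hM i hi
    omega
  rw [prod_congr rfl hrow, prod_comm]
  refine prod_congr rfl fun k _ => ?_
  rw [← prod_filter, prod_const, columnLength]

theorem prod_factorial_eq_prod_pow_columnLength (hM : ∀ i ∈ range N, a i ≤ M) :
    ∏ i ∈ range N, (a i)! = ∏ k ∈ range M, (k + 1) ^ columnLength a N k := by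
  simp only [← prod_range_add_one_eq_factorial]
  exact prod_prod_range_eq_prod_pow_columnLength _ hM

theorem sum_columnLength (hM : ∀ i ∈ range N, a i ≤ M) :
    ∑ k ∈ range M, columnLength a N k = ∑ i ∈ range N, a i := by
  simpa only [sum_const, card_range, smul_eq_mul, mul_one] using
    (sum_sum_range_eq_sum_nsmul_columnLength (fun _ => (1 : ℕ)) hM).symm

end ColumnLength

theorem prod_pow_le_prod_factorial_mul_exp_sum {ι : Type*} (s : Finset ι) {x : ι → ℝ}
    (hx : ∀ i ∈ s, 0 ≤ x i) (m : ι → ℕ) :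
    ∏ i ∈ s, x i ^ m i ≤ (∏ i ∈ s, ((m i)! : ℝ)) * exp (∑ i ∈ s, x i) := by
  rw [exp_sum, ← prod_mul_distrib]
  refine prod_le_prod (fun i hi => pow_nonneg (hx i hi) _) fun i hi => ?_
  rw [← div_le_iff₀' (by positivity)]
  exact pow_div_factorial_le_exp _ (hx i hi) _

theorem pow_sum_le_prod_pow_mul_prod_factorial_mul_exp {t : ℝ} (ht : 0 ≤ t) (m : ℕ → ℕ)
    (M : ℕ) :
    t ^ ∑ k ∈ range M, m k ≤ (∏ k ∈ range M, ((k : ℝ) + 1) ^ m k) *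
      (∏ k ∈ range M, ((m k)! : ℝ)) * exp (t * ∑ k ∈ range M, 1 / ((k : ℝ) + 1)) := by
  have hsplit : ∀ k ∈ range M, t ^ m k = ((k : ℝ) + 1) ^ m k * (t / ((k : ℝ) + 1)) ^ m k :=
    fun k _ => by rw [← mul_pow, mul_div_cancel₀ _ (by positivity)]
  rw [← prod_pow_eq_pow_sum, prod_congr rfl hsplit, prod_mul_distrib, mul_assoc, mul_sum]
  gcongr
  simpa only [mul_one_div] using
    prod_pow_le_prod_factorial_mul_exp_sum _ (fun k _ => by positivity) m

theorem conjugate_partitions_factorial_bound_general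
    (n : ℕ) (a c : ℕ → ℕ)
    (hsum : ∑ i ∈ Finset.range n, a i = n)
    (hzero : ∀ i, n ≤ i → a i = 0)
    (hconj : ∀ k : ℕ, c k = Nat.card {i : ℕ | k + 1 ≤ a i}) :
    ((n : ℝ) / (Real.exp 1 * ∑ i ∈ Finset.range n, (1 : ℝ) / (i + 1))) ^ n ≤
      (∏ i ∈ Finset.range n, (Nat.factorial (a i) : ℝ)) *
        ∏ i ∈ Finset.range n, (Nat.factorial (c i) : ℝ) := by
  rcases n.eq_zero_or_pos with rfl | hn
  · simp
  set H := ∑ i ∈ range n, (1 : ℝ) / (i + 1)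
  have hH : 0 < H := sum_pos (fun i _ => by positivity) (nonempty_range_iff.2 hn.ne')
  have hc : c = columnLength a n := funext fun k =>
    (hconj k).trans (card_setOf_succ_le_eq_columnLength hzero k)
  have hrow : ∀ i ∈ range n, a i ≤ n := fun i hi =>
    hsum ▸ single_le_sum (fun _ _ => Nat.zero_le _) hi
  have hprod : ∏ i ∈ range n, ((a i)! : ℝ) = ∏ k ∈ range n, ((k : ℝ) + 1) ^ c k := by
    exact_mod_cast hc ▸ prod_factorial_eq_prod_pow_columnLength hrow
  have key := pow_sum_le_prod_pow_mul_prod_factorial_mul_exp (by positivity : 0 ≤ n / H) c n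
  rw [hc, sum_columnLength hrow, hsum, div_mul_cancel₀ _ hH.ne', ← hc, ← hprod] at key
  rw [mul_comm, ← div_div, div_pow, exp_one_pow, div_le_iff₀ (exp_pos _)]
  exact key

/-- **Product of factorials of conjugate partitions.**
Let `a 0 ≥ a 1 ≥ …` and `c 0 ≥ c 1 ≥ …` (both 0-indexed, padded by zeros) be
two conjugate partitions of `n ≥ 1` into positive parts, so that
`c k = #{i : a i ≥ k+1}`. Then
`∏ i, (a i)! * ∏ i, (c i)! ≥ (n / (e * H_n))^n`,
where `H_n = 1 + 1/2 + … + 1/n`. -/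
theorem conjugate_partitions_factorial_bound
    (n : ℕ) (hn : 0 < n) (a c : ℕ → ℕ)
    (ha : Antitone a)
    (hsum : ∑ i ∈ Finset.range n, a i = n)
    (hzero : ∀ i, n ≤ i → a i = 0)
    (hconj : ∀ k : ℕ, c k = Nat.card {i : ℕ | k + 1 ≤ a i}) :
    ((n : ℝ) / (Real.exp 1 * ∑ i ∈ Finset.range n, (1 : ℝ) / (i + 1))) ^ n ≤
      (∏ i ∈ Finset.range n, (Nat.factorial (a i) : ℝ)) *
        ∏ i ∈ Finset.range n, (Nat.factorial (c i) : ℝ) :=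
  conjugate_partitions_factorial_bound_general n a c hsum hzero hconj
end

section
/- Let n be a positive integer and let a_1, a_2, …, a_n be non-negative integers with a_1 + a_2 + … + a_n = n. Then ∏_{k=1}^{n} k^{a_k} · a_k! ≥ (n / (e·H_n))^n, where H_n = 1 + 1/2 + … + 1/n is the n-th harmonic number and e is Euler's number. -/
/-!
Stirling's crude bound `m! ≥ (m / e)^m` reduces the claim to
`∏ (k a_k)^(a_k) ≥ (n / H_n)^n`. This is AM-GM for the numbers `1 / (k a_k)` with
multiplicities `a_k`: their weighted arithmetic mean is `(1/n) ∑_{a_k > 0} 1/k ≤ H_n / n`.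
-/

open Finset Real

theorem prod_pow_le_weighted_mean_pow {ι : Type*} (s : Finset ι) (a : ι → ℕ) (z : ι → ℝ)
    (hz : ∀ i ∈ s, 0 ≤ z i) :
    ∏ i ∈ s, z i ^ a i ≤ ((∑ i ∈ s, a i * z i) / ∑ i ∈ s, a i) ^ ∑ i ∈ s, a i := by
  rcases Nat.eq_zero_or_pos (∑ i ∈ s, a i) with hN | hN
  · rw [hN, pow_zero]
    exact (prod_eq_one fun i hi => by rw [sum_eq_zero_iff.mp hN i hi, pow_zero]).le
  have hG : 0 ≤ ∏ i ∈ s, z i ^ a i := prod_nonneg fun i hi => pow_nonneg (hz i hi) _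
  have amgm := geom_mean_le_arith_mean s (fun i => (a i : ℝ)) z (fun i _ => by positivity)
    (by exact_mod_cast hN) hz
  simp only [rpow_natCast] at amgm
  calc ∏ i ∈ s, z i ^ a i
      = ((∏ i ∈ s, z i ^ a i) ^ ((∑ i ∈ s, a i : ℕ) : ℝ)⁻¹) ^ ∑ i ∈ s, a i :=
        (rpow_inv_natCast_pow hG hN.ne').symm
    _ ≤ _ := by
        push_cast
        exact pow_le_pow_left₀ (rpow_nonneg hG _) amgm _

theorem pow_self_div_exp_pow_le_factorial (m : ℕ) : (m : ℝ) ^ m / exp 1 ^ m ≤ m.factorial := by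
  rw [div_le_iff₀ (by positivity), ← div_le_iff₀' (by positivity), exp_one_pow]
  exact pow_div_factorial_le_exp _ m.cast_nonneg m

theorem mul_inv_mul_self_le_inv {k : ℝ} (hk : 0 ≤ k) (a : ℝ) : a * (k * a)⁻¹ ≤ k⁻¹ := by
  rcases eq_or_ne a 0 with rfl | ha
  · simpa using hk
  · rw [mul_inv, mul_left_comm, mul_inv_cancel₀ ha, mul_one]

theorem sum_range_one_div_succ (n : ℕ) :
    ∑ i ∈ range n, (1 : ℝ) / (i + 1) = ∑ k ∈ Icc 1 n, (k : ℝ)⁻¹ := by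
  rw [← Ico_add_one_right_eq_Icc, sum_Ico_eq_sum_range]
  simp [add_comm]

theorem div_harmonic_pow_le_prod_mul_pow (n : ℕ) (a : ℕ → ℕ)
    (hsum : ∑ k ∈ Icc 1 n, a k = n) :
    ((n : ℝ) / ∑ k ∈ Icc 1 n, (k : ℝ)⁻¹) ^ n ≤ ∏ k ∈ Icc 1 n, ((k : ℝ) * a k) ^ a k := by
  set H := ∑ k ∈ Icc 1 n, (k : ℝ)⁻¹
  have hP : 0 < ∏ k ∈ Icc 1 n, ((k : ℝ) * a k) ^ a k := by
    refine prod_pos fun k hk => ?_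
    have hk : (0 : ℝ) < k := by exact_mod_cast (mem_Icc.mp hk).1
    rcases Nat.eq_zero_or_pos (a k) with h | h
    · simp [h]
    · have : (0 : ℝ) < a k := by exact_mod_cast h
      positivity
  have hmean : ∑ k ∈ Icc 1 n, (a k : ℝ) * ((k : ℝ) * a k)⁻¹ ≤ H :=
    sum_le_sum fun k _ => mul_inv_mul_self_le_inv k.cast_nonneg _
  have amgm := prod_pow_le_weighted_mean_pow (Icc 1 n) a (fun k => ((k : ℝ) * a k)⁻¹)
    (fun k _ => by positivity)
  rw [hsum, prod_congr rfl fun k _ => inv_pow _ _, prod_inv_distrib] at amgm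
  rw [← inv_div, inv_pow]
  refine inv_le_of_inv_le₀ hP (amgm.trans (pow_le_pow_left₀ ?_ ?_ n))
  · exact div_nonneg (sum_nonneg fun k _ => by positivity) n.cast_nonneg
  · exact div_le_div_of_nonneg_right hmean n.cast_nonneg

theorem weighted_factorial_product_bound_general
    (n : ℕ) (a : ℕ → ℕ)
    (hsum : ∑ k ∈ Finset.Icc 1 n, a k = n) :
    ((n : ℝ) / (Real.exp 1 * ∑ i ∈ Finset.range n, (1 : ℝ) / (i + 1))) ^ n ≤
      ∏ k ∈ Finset.Icc 1 n, (k : ℝ) ^ (a k) * (Nat.factorial (a k) : ℝ) := by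
  have hexp : exp 1 ^ n = ∏ k ∈ Icc 1 n, exp 1 ^ a k := by
    rw [prod_pow_eq_pow_sum, hsum]
  calc ((n : ℝ) / (exp 1 * ∑ i ∈ range n, (1 : ℝ) / (i + 1))) ^ n
      = ((n : ℝ) / ∑ k ∈ Icc 1 n, (k : ℝ)⁻¹) ^ n / exp 1 ^ n := by
        rw [sum_range_one_div_succ, ← div_pow, div_div, mul_comm]
    _ ≤ (∏ k ∈ Icc 1 n, ((k : ℝ) * a k) ^ a k) / exp 1 ^ n := by
        gcongr
        exact div_harmonic_pow_le_prod_mul_pow n a hsum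
    _ = ∏ k ∈ Icc 1 n, (k : ℝ) ^ a k * ((a k : ℝ) ^ a k / exp 1 ^ a k) := by
        rw [hexp, ← prod_div_distrib]
        exact prod_congr rfl fun k _ => by rw [mul_pow, mul_div_assoc]
    _ ≤ ∏ k ∈ Icc 1 n, (k : ℝ) ^ a k * (a k).factorial := by
        gcongr with k
        exact pow_self_div_exp_pow_le_factorial (a k)

/-- Let `n ≥ 1` and let `a 1, …, a n` be non-negative integers with
`a 1 + … + a n = n`. Then `∏_{k=1}^{n} k^(a k) * (a k)! ≥ (n / (e * H_n))^n`,
where `H_n = 1 + 1/2 + … + 1/n`. -/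
theorem weighted_factorial_product_bound
    (n : ℕ) (hn : 0 < n) (a : ℕ → ℕ)
    (hsum : ∑ k ∈ Finset.Icc 1 n, a k = n) :
    ((n : ℝ) / (Real.exp 1 * ∑ i ∈ Finset.range n, (1 : ℝ) / (i + 1))) ^ n ≤
      ∏ k ∈ Finset.Icc 1 n, (k : ℝ) ^ (a k) * (Nat.factorial (a k) : ℝ) :=
  weighted_factorial_product_bound_general n a hsum
end
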